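/- Let ν := (1/3)(δ_{(0,3/8)} + δ_{(3/8,1)} + δ_{(5/8,5/8)}) on [0,1]². If (S,B) ∼ ν, then for every price p ∈ [0,1/2], E[fgft(11/16,S,B)] − E[fgft(p,S,B)] ≥ 1/24. -/
import Mathlib


open MeasureTheory ENNReal

noncomputable def fgft (p s b : ℝ) : ℝ := min (max (p - s) 0) (max (b - p) 0)

noncomputable def nuDist : Measure (ℝ × ℝ) :=
  ((1:ℝ≥0∞)/3) • Measure.dirac (0, 3/8) + ((1:ℝ≥0∞)/3) • Measure.dirac (3/8, 1)
    + ((1:ℝ≥0∞)/3) • Measure.dirac (5/8, 5/8)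

lemma fgft_cont (q : ℝ) : Continuous (fun x : ℝ × ℝ => fgft q x.1 x.2) := by
  unfold fgft; fun_prop

lemma integral_nu (q : ℝ) :
    (∫ x, fgft q x.1 x.2 ∂nuDist)
      = (1/3) * (fgft q 0 (3/8) + fgft q (3/8) 1 + fgft q (5/8) (5/8)) := by
  have hm : StronglyMeasurable (fun x : ℝ × ℝ => fgft q x.1 x.2) :=
    (fgft_cont q).stronglyMeasurable
  have hint : ∀ a : ℝ × ℝ, Integrable (fun x : ℝ × ℝ => fgft q x.1 x.2)
      (((1:ℝ≥0∞)/3) • Measure.dirac a) := by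
    intro a
    refine Integrable.smul_measure ⟨hm.aestronglyMeasurable, ?_⟩ (by simp)
    rw [HasFiniteIntegral, lintegral_dirac]
    exact ENNReal.coe_lt_top
  rw [nuDist, integral_add_measure ((hint _).add_measure (hint _)) (hint _),
    integral_add_measure (hint _) (hint _), integral_smul_measure,
    integral_smul_measure, integral_smul_measure,
    integral_dirac (fun x : ℝ × ℝ => fgft q x.1 x.2),
    integral_dirac (fun x : ℝ × ℝ => fgft q x.1 x.2),
    integral_dirac (fun x : ℝ × ℝ => fgft q x.1 x.2)]
  have : ((1:ℝ≥0∞)/3).toReal = 1/3 := by simp [ENNReal.toReal_div]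
  rw [this]; simp only [smul_eq_mul]; ring

theorem nu_gap (p : ℝ) (hp : p ∈ Set.Icc (0:ℝ) (1/2)) :
    (∫ x, fgft (11/16) x.1 x.2 ∂nuDist) - (∫ x, fgft p x.1 x.2 ∂nuDist) ≥ 1/24 := by
  obtain ⟨h0, h1⟩ := hp
  have e1 : fgft (11/16) 0 (3/8) = 0 := by norm_num [fgft]
  have e2 : fgft (11/16) (3/8) 1 = 5/16 := by norm_num [fgft]
  have e3 : fgft (11/16) (5/8) (5/8) = 0 := by norm_num [fgft]
  have h3 : fgft p (5/8) (5/8) = 0 := by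
    unfold fgft
    rw [max_eq_right (by linarith : p - 5/8 ≤ 0), min_eq_left (le_max_right _ _)]
  have h12 : fgft p 0 (3/8) + fgft p (3/8) 1 ≤ 3/16 := by
    unfold fgft
    rcases le_total p (3/8) with h | h
    · have b2 : min (max (p - 3/8) 0) (max (1 - p) 0) ≤ 0 :=
        le_trans (min_le_left _ _) (by rw [max_eq_right (by linarith)])
      have b1 : min (max (p - 0) 0) (max (3/8 - p) 0) ≤ 3/16 := by
        rcases le_total p (3/16) with h' | h'
        · exact le_trans (min_le_left _ _) (max_le (by linarith) (by norm_num))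
        · exact le_trans (min_le_right _ _) (max_le (by linarith) (by norm_num))
      linarith
    · have b1 : min (max (p - 0) 0) (max (3/8 - p) 0) ≤ 0 :=
        le_trans (min_le_right _ _) (by rw [max_eq_right (by linarith)])
      have b2 : min (max (p - 3/8) 0) (max (1 - p) 0) ≤ 1/8 :=
        le_trans (min_le_left _ _) (max_le (by linarith) (by norm_num))
      linarith
  rw [integral_nu, integral_nu, e1, e2, e3, h3]
  linarith
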